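/- (Kálmán's covariance formula) Let x_f : Ω → ℝ^M and z : Ω → ℝ^I be square-integrable random vectors with covariance matrices C_{x_f z}, C_{x_f}, and C_z, and assume C_z is invertible. Fix an observation ŷ ∈ ℝ^I, set K := C_{x_f z} C_z^{-1}, and define the assimilated random vector x_a(ω) := x_f(ω) + K(ŷ − z(ω)). Then the covariance matrix of x_a is C_{x_a} = C_{x_f} − C_{x_f z} C_z^{-1} C_{x_f z}ᵀ = C_{x_f} − K C_{x_f z}ᵀ. -/

import Mathlib

/-!
The residual `e := x_f − K z` is uncorrelated with `z`, since `C_{ez} = C_{x_f z} − K C_z = 0`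
for `K = C_{x_f z} C_z⁻¹` (the orthogonality principle). As `x_a` differs from `e` by the
constant `K ŷ`, bilinearity of the covariance gives
`C_{x_a} = C_e = C_{e x_f} − C_{ez} Kᵀ = C_{e x_f} = C_{x_f} − K C_{x_f z}ᵀ`.
-/

open MeasureTheory Matrix

/-- The covariance matrix of two square-integrable random vectors:
`(C_{xz})_{m i} = E[(x_m − E[x_m])(z_i − E[z_i])]`. -/
noncomputable def covMatrix {Ω : Type*} [MeasurableSpace Ω] (ℙ : Measure Ω)
    {M I : ℕ} (x : Ω → Fin M → ℝ) (z : Ω → Fin I → ℝ) : Matrix (Fin M) (Fin I) ℝ :=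
  Matrix.of fun m i =>
    ∫ ω, (x ω m - ∫ ω', x ω' m ∂ℙ) * (z ω i - ∫ ω', z ω' i ∂ℙ) ∂ℙ

theorem memLp_mulVec_apply {Ω ι κ : Type*} [MeasurableSpace Ω] [Fintype κ] {μ : Measure Ω}
    {p : ENNReal} {z : Ω → κ → ℝ} (hz : ∀ k, MemLp (fun ω => z ω k) p μ) (A : Matrix ι κ ℝ)
    (i : ι) : MemLp (fun ω => (A *ᵥ z ω) i) p μ :=
  memLp_finsetSum _ fun k _ => (hz k).const_mul (A i k)

section Covariance

open ProbabilityTheory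

variable {Ω : Type*} [MeasurableSpace Ω] {μ : Measure Ω} {M N L : ℕ}

theorem covMatrix_apply (x : Ω → Fin M → ℝ) (w : Ω → Fin L → ℝ) (m : Fin M) (l : Fin L) :
    covMatrix μ x w m l = cov[fun ω => x ω m, fun ω => w ω l; μ] :=
  rfl

theorem covMatrix_transpose (x : Ω → Fin M → ℝ) (w : Ω → Fin L → ℝ) :
    (covMatrix μ x w)ᵀ = covMatrix μ w x := by
  ext l m
  exact covariance_comm _ _

theorem covMatrix_add_const [IsProbabilityMeasure μ] {x : Ω → Fin M → ℝ} {w : Ω → Fin L → ℝ}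
    (hx : ∀ m, Integrable (fun ω => x ω m) μ) (hw : ∀ l, Integrable (fun ω => w ω l) μ)
    (c : Fin M → ℝ) (d : Fin L → ℝ) :
    covMatrix μ (fun ω => x ω + c) (fun ω => w ω + d) = covMatrix μ x w := by
  ext m l
  simp only [covMatrix_apply, Pi.add_apply, covariance_add_const_left (hx m),
    covariance_add_const_right (hw l)]

theorem covMatrix_sub_mulVec_left [IsFiniteMeasure μ] {x : Ω → Fin M → ℝ} {z : Ω → Fin N → ℝ}
    {w : Ω → Fin L → ℝ} (hx : ∀ m, MemLp (fun ω => x ω m) 2 μ)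
    (hz : ∀ n, MemLp (fun ω => z ω n) 2 μ) (hw : ∀ l, MemLp (fun ω => w ω l) 2 μ)
    (A : Matrix (Fin M) (Fin N) ℝ) :
    covMatrix μ (fun ω => x ω - A *ᵥ z ω) w = covMatrix μ x w - A * covMatrix μ z w := by
  ext m l
  calc covMatrix μ (fun ω => x ω - A *ᵥ z ω) w m l
      = cov[fun ω => x ω m - (A *ᵥ z ω) m, fun ω => w ω l; μ] := rfl
    _ = cov[fun ω => x ω m, fun ω => w ω l; μ] -
          cov[fun ω => ∑ n, A m n * z ω n, fun ω => w ω l; μ] :=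
      covariance_fun_sub_left (hx m) (memLp_mulVec_apply hz A m) (hw l)
    _ = cov[fun ω => x ω m, fun ω => w ω l; μ] -
          ∑ n, A m n * cov[fun ω => z ω n, fun ω => w ω l; μ] := by
      rw [covariance_fun_sum_left (fun n => (hz n).const_mul (A m n)) (hw l)]
      simp only [covariance_const_mul_left]
    _ = (covMatrix μ x w - A * covMatrix μ z w) m l := rfl

theorem covMatrix_sub_mulVec_right [IsFiniteMeasure μ] {x : Ω → Fin M → ℝ} {z : Ω → Fin N → ℝ}
    {w : Ω → Fin L → ℝ} (hx : ∀ m, MemLp (fun ω => x ω m) 2 μ)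
    (hz : ∀ n, MemLp (fun ω => z ω n) 2 μ) (hw : ∀ l, MemLp (fun ω => w ω l) 2 μ)
    (A : Matrix (Fin M) (Fin N) ℝ) :
    covMatrix μ w (fun ω => x ω - A *ᵥ z ω) = covMatrix μ w x - covMatrix μ w z * Aᵀ := by
  rw [← covMatrix_transpose, covMatrix_sub_mulVec_left hx hz hw, transpose_sub, transpose_mul,
    covMatrix_transpose, covMatrix_transpose]

end Covariance

/-- Kálmán's covariance formula: the covariance of the assimilated random vector
`x_a = x_f + K(ŷ − z)` is `C_{x_a} = C_{x_f} − C_{x_f z} C_z⁻¹ C_{x_f z}ᵀ = C_{x_f} − K C_{x_f z}ᵀ`. -/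
theorem kalman_covariance_formula
    {Ω : Type*} [MeasurableSpace Ω] (ℙ : Measure Ω) [IsProbabilityMeasure ℙ]
    {M I : ℕ} (x_f : Ω → Fin M → ℝ) (z : Ω → Fin I → ℝ)
    (hx : ∀ m, MemLp (fun ω => x_f ω m) 2 ℙ) (hz : ∀ i, MemLp (fun ω => z ω i) 2 ℙ)
    (hCz : IsUnit (covMatrix ℙ z z))
    (yhat : Fin I → ℝ)
    (K : Matrix (Fin M) (Fin I) ℝ) (hK : K = covMatrix ℙ x_f z * (covMatrix ℙ z z)⁻¹)
    (x_a : Ω → Fin M → ℝ) (hxa : x_a = fun ω => x_f ω + K.mulVec (yhat - z ω)) :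
    covMatrix ℙ x_a x_a =
        covMatrix ℙ x_f x_f -
          covMatrix ℙ x_f z * (covMatrix ℙ z z)⁻¹ * (covMatrix ℙ x_f z)ᵀ ∧
      covMatrix ℙ x_a x_a = covMatrix ℙ x_f x_f - K * (covMatrix ℙ x_f z)ᵀ := by
  set e : Ω → Fin M → ℝ := fun ω => x_f ω - K *ᵥ z ω
  have he : ∀ m, MemLp (fun ω => e ω m) 2 ℙ := fun m =>
    (hx m).sub (memLp_mulVec_apply hz K m)
  have hxa_e : x_a = fun ω => e ω + K *ᵥ yhat := by
    rw [hxa]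
    funext ω
    simp only [e, mulVec_sub]
    abel
  have e_uncorrelated_z : covMatrix ℙ e z = 0 := by
    rw [covMatrix_sub_mulVec_left hx hz hz, hK, Matrix.mul_assoc,
      nonsing_inv_mul _ ((isUnit_iff_isUnit_det _).mp hCz), Matrix.mul_one, sub_self]
  have key : covMatrix ℙ x_a x_a = covMatrix ℙ x_f x_f - K * (covMatrix ℙ x_f z)ᵀ := by
    rw [hxa_e, covMatrix_add_const (fun m => (he m).integrable one_le_two)
        (fun m => (he m).integrable one_le_two),
      covMatrix_sub_mulVec_right hx hz he, e_uncorrelated_z, Matrix.zero_mul, sub_zero,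
      covMatrix_sub_mulVec_left hx hz hx, covMatrix_transpose]
  refine ⟨?_, key⟩
  rw [key, hK, Matrix.mul_assoc]
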